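/- Let L be an invertible element of an associative ring R with splitting R = R_+ ⊕ R_− as for pseudodifferential operators (R_+ a subring, residues of commutators are total derivatives, and res(XY) = 0 whenever both X, Y ∈ R_+). Then for all positive integers i, j, k, the quantity res([L^i_+, L^j_+]·L^k_− + [L^j_+, L^k_+]·L^i_− + [L^k_+, L^i_+]·L^j_−) is a total derivative, i.e., lies in the image of the derivation D; explicitly it equals −2·res(Λ) where Λ = (1/2)([L^i_+ L^j_− − L^j_+ L^i_−, L^k] + [L^k_+ L^i_−, L^j_+] + [L^i_+, L^k_+ L^j_−] + [L^i_−, L^{j+k}] + [L^{i+k}, L^j_−]). -/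

import Mathlib

/-!
Bounded-above coefficient sequences form an associative ring `PDO d` under `pmul`: associativity
is the Leibniz rule for `dⁿ` combined with Vandermonde's identity for `Ring.choose`. In it `res`
kills products of two differential operators and products of two operators of negative order, and
`res [x, y]` is a total derivative by Lagrange's bilinear concomitant, after the reflection
`C(l - 1 - i, l) = (-1)ˡ C(i, l)`. Split `x = Lⁱ = P + p`, `y = Lʲ = Q + q`, `z = Lᵏ = R + r` into
their `±` parts. Since `x, y, z` commute, a computation valid in every ring shows that the cyclic
sum plus the five commutators of `2Λ` equals `-[P, Q] R - R [P, Q] + r [p, q]`, and this has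
residue `0`.
-/

open scoped BigOperators

namespace Paper

variable {A : Type*} [CommRing A]

/-- Generalized binomial coefficient `C(k,i) = k(k-1)⋯(k-i+1)/i!` for `k : ℤ`. -/
noncomputable def gbinom (k : ℤ) (i : ℕ) : ℤ :=
  (∏ j ∈ Finset.range i, (k - (j : ℤ))) / (i.factorial : ℤ)

/-- Multiplication of pseudodifferential operators, given by their coefficient
functions `ℤ → A`, with `∂^k f = Σ_{l≥0} C(k,l) D^l(f) ∂^(k-l)`. -/
noncomputable def pmul (D : A → A) (X Y : ℤ → A) : ℤ → A :=
  fun k => ∑ᶠ i : ℤ, ∑ᶠ l : ℕ, X i * (gbinom i l • D^[l] (Y (k + (l : ℤ) - i)))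

/-- The residue: the coefficient of `∂⁻¹`. -/
def res (X : ℤ → A) : A := X (-1)

/-- The nonnegative-order (differential-operator) part. -/
def pplus (X : ℤ → A) : ℤ → A := fun i => if 0 ≤ i then X i else 0

/-- The strictly negative-order part. -/
def pminus (X : ℤ → A) : ℤ → A := fun i => if i < 0 then X i else 0

/-- Boundedness of the order: coefficients vanish above some `M`. -/
def Bdd (X : ℤ → A) : Prop := ∃ M : ℤ, ∀ i : ℤ, M < i → X i = 0

/-- Commutator of pseudodifferential operators. -/
noncomputable def pcomm (D : A → A) (X Y : ℤ → A) : ℤ → A :=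
  pmul D X Y - pmul D Y X

/-- The identity operator. -/
def pone : ℤ → A := fun i => if i = 0 then 1 else 0

/-- The single-term operator `s ∂^m`. -/
def psingle (m : ℤ) (s : A) : ℤ → A := fun i => if i = m then s else 0

/-- Powers of a pseudodifferential operator. -/
noncomputable def ppow (D : A → A) (X : ℤ → A) : ℕ → ℤ → A
  | 0 => pone
  | n + 1 => pmul D X (ppow D X n)

/-- `D` is a derivation: additive and Leibniz. -/
def IsDeriv (D : A → A) : Prop :=
  (∀ a b : A, D (a + b) = D a + D b) ∧ ∀ a b : A, D (a * b) = D a * b + a * D b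

/-- Nonnegative part of `L^n`. -/
noncomputable def Lplus (D : A → A) (L : ℤ → A) (n : ℕ) : ℤ → A := pplus (ppow D L n)

/-- Strictly negative part of `L^n`. -/
noncomputable def Lminus (D : A → A) (L : ℤ → A) (n : ℕ) : ℤ → A := pminus (ppow D L n)

end Paper

open Finset

namespace Derivation

section Iterate

variable {R A : Type*} [CommSemiring R] [CommSemiring A] [Algebra R A] (d : Derivation R A A)

theorem iterate_eq_coe_pow (n : ℕ) : (⇑d)^[n] = ⇑((d : Module.End R A) ^ n) := by
  rw [Module.End.coe_pow, coeFn_coe]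

theorem iterate_map_sum {ι : Type*} (n : ℕ) (s : Finset ι) (f : ι → A) :
    d^[n] (∑ i ∈ s, f i) = ∑ i ∈ s, d^[n] (f i) := by
  rw [iterate_eq_coe_pow, map_sum]

theorem iterate_apply_mul (n : ℕ) (a b : A) :
    d^[n] (a * b) = ∑ ij ∈ antidiagonal n, n.choose ij.1 • (d^[ij.1] a * d^[ij.2] b) := by
  induction n with
  | zero => simp
  | succ n ih =>
    rw [sum_antidiagonal_choose_succ_nsmul (fun i j => d^[i] a * d^[j] b),
      Function.iterate_succ_apply', ih, map_sum, ← sum_add_distrib]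
    refine sum_congr rfl fun ij hij => ?_
    rw [Nat.choose_symm_of_eq_add (mem_antidiagonal.1 hij).symm, map_nsmul, leibniz,
      smul_eq_mul, smul_eq_mul, ← Function.iterate_succ_apply' d, ← Function.iterate_succ_apply' d]
    ring

theorem iterate_apply_mul_eq_sum_range {n N : ℕ} (hn : n < N) (a b : A) :
    d^[n] (a * b) = ∑ e ∈ range N, n.choose e • (d^[e] a * d^[n - e] b) := by
  rw [iterate_apply_mul, Nat.sum_antidiagonal_eq_sum_range_succ_mk]
  refine sum_subset (range_subset_range.2 hn) fun e _ he => ?_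
  rw [Nat.choose_eq_zero_of_lt (by simpa using he), zero_smul]

end Iterate

section Ring

variable {R A : Type*} [CommRing R] [CommRing A] [Algebra R A] (d : Derivation R A A)

theorem iterate_map_zsmul (n : ℕ) (z : ℤ) (a : A) : d^[n] (z • a) = z • d^[n] a := by
  rw [iterate_eq_coe_pow, map_zsmul]

/-- Lagrange's bilinear concomitant. -/
theorem bilinear_concomitant (n : ℕ) (a b : A) :
    d (∑ m ∈ range n, (-1 : ℤ) ^ m • (d^[m] a * d^[n - 1 - m] b))
      = a * d^[n] b - (-1 : ℤ) ^ n • (d^[n] a * b) := by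
  let f : ℕ → A := fun m => (-1 : ℤ) ^ m • (d^[m] a * d^[n - m] b)
  have telescope : ∀ m ∈ range n,
      d ((-1 : ℤ) ^ m • (d^[m] a * d^[n - 1 - m] b)) = f m - f (m + 1) := by
    intro m hm
    have h₁ : n - 1 - m = n - (m + 1) := by omega
    have h₂ : n - (m + 1) + 1 = n - m := by simp at hm; omega
    simp only [f, map_zsmul, leibniz, smul_eq_mul, ← Function.iterate_succ_apply' d,
      Nat.succ_eq_add_one, h₁, h₂, pow_succ]
    ring
  rw [map_sum, sum_congr rfl telescope, sum_range_sub']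
  simp [f]

end Ring

end Derivation

namespace Finset

variable {M : Type*} [AddCommMonoid M]

theorem sum_range_eq_sum_range_add_of_eq_zero {N : ℕ} (e : ℕ) {F : ℕ → M}
    (h_lt : ∀ m < e, F m = 0) (h_ge : ∀ m, N ≤ m → F m = 0) :
    ∑ m ∈ range N, F m = ∑ m ∈ range N, F (e + m) := by
  have h_ext : ∑ m ∈ range (e + N), F m = ∑ m ∈ range N, F m :=
    (sum_subset (range_subset_range.2 (Nat.le_add_left N e)) fun m _ hm =>
      h_ge m (by simpa using hm)).symm
  rw [← h_ext, sum_range_add, sum_eq_zero fun m hm => h_lt m (mem_range.1 hm), zero_add]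

theorem sum_range_sum_range_eq_sum_range_sum_antidiagonal {N : ℕ} {f : ℕ → ℕ → M}
    (hf : ∀ i j, N ≤ i + j → f i j = 0) :
    ∑ i ∈ range N, ∑ j ∈ range N, f i j = ∑ l ∈ range N, ∑ p ∈ antidiagonal l, f p.1 p.2 := by
  simp_rw [Nat.sum_antidiagonal_eq_sum_range_succ f, range_eq_Ico, ← sum_Ico_Ico_comm,
    sum_Ico_eq_sum_range, Nat.add_sub_cancel_left, Nat.sub_zero, zero_add]
  refine sum_congr rfl fun i hi => (sum_subset (range_subset_range.2 (Nat.sub_le N i))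
    fun j _ hj => hf i j ?_).symm
  simp only [mem_range, not_lt] at hj
  omega

end Finset

theorem Ring.sum_range_choose_mul_choose_smul {M : Type*} [AddCommGroup M] (a b : ℤ) {e N : ℕ}
    {G : ℕ → M} (hG : ∀ l, N ≤ l + e → G l = 0) :
    ∑ m ∈ range N, ∑ n ∈ range N, (choose a m * m.choose e * choose b n) • G (m - e + n)
      = choose a e • ∑ l ∈ range N, choose (a + b - e) l • G l := by
  have h_shift := sum_range_eq_sum_range_add_of_eq_zero (N := N) e
    (F := fun m => ∑ n ∈ range N, (choose a m * m.choose e * choose b n) • G (m - e + n))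
    (fun m hm => by simp [Nat.choose_eq_zero_of_lt hm])
    (fun m hm => sum_eq_zero fun n _ => by
      by_cases hme : e ≤ m
      · rw [hG (m - e + n) (by omega), smul_zero]
      · simp [Nat.choose_eq_zero_of_lt (not_le.1 hme)])
  have h_coeff : ∀ m n : ℕ, choose a (e + m) * ((e + m).choose e : ℤ) * choose b n
      = choose a e * (choose (a - e) m * choose b n) := by
    intro m n
    have := choose_smul_choose a (Nat.le_add_right e m)
    rw [nsmul_eq_mul, Nat.add_sub_cancel_left] at this
    rw [mul_comm (choose a (e + m)), this, mul_assoc]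
  rw [h_shift]
  simp only [h_coeff, Nat.add_sub_cancel_left, mul_smul (choose a e), ← smul_sum]
  rw [sum_range_sum_range_eq_sum_range_sum_antidiagonal fun i j hij => by
    rw [hG _ (by omega), smul_zero]]
  congr 1
  refine sum_congr rfl fun l _ => ?_
  rw [show a + b - e = a - e + b by ring, add_choose_eq l (Commute.all _ _), sum_smul]
  refine sum_congr rfl fun p hp => ?_
  rw [mem_antidiagonal.1 hp, mul_smul]

theorem cyclic_commutator_identity {α : Type*} [Ring α] {x y z P p Q q R r : α}
    (hx : P + p = x) (hy : Q + q = y) (hz : R + r = z)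
    (hxy : Commute x y) (hyz : Commute y z) (hzx : Commute z x) :
    ((P * Q - Q * P) * r + (Q * R - R * Q) * p + (R * P - P * R) * q)
      + ((P * q - Q * p) * z - z * (P * q - Q * p)
        + (R * p * Q - Q * (R * p))
        + (P * (R * q) - R * q * P)
        + (p * (y * z) - y * z * p)
        + (x * z * q - q * (x * z)))
    = -((P * Q - Q * P) * R) - R * (P * Q - Q * P) + r * (p * q - q * p) := by
  subst hx hy hz
  calc _ = -((P * Q - Q * P) * R) - R * (P * Q - Q * P) + r * (p * q - q * p)
        + (((P + p) * (Q + q) - (Q + q) * (P + p)) * (R + r)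
          + R * ((P + p) * (Q + q) - (Q + q) * (P + p))
          - ((Q + q) * (R + r) - (R + r) * (Q + q)) * p
          - ((R + r) * (P + p) - (P + p) * (R + r)) * q) := by noncomm_ring
    _ = _ := by rw [sub_eq_zero.2 hxy.eq, sub_eq_zero.2 hyz.eq, sub_eq_zero.2 hzx.eq]; simp

theorem Int.choose_eq_zero_of_lt {a : ℤ} {n : ℕ} (h₀ : 0 ≤ a) (h : a < n) :
    Ring.choose a n = 0 := by
  lift a to ℕ using h₀
  rw [Ring.choose_natCast, Nat.choose_eq_zero_of_lt (by omega), Nat.cast_zero]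

namespace Paper

variable {A : Type*} [CommRing A]

theorem gbinom_eq_choose (k : ℤ) (i : ℕ) : gbinom k i = Ring.choose k i := by
  have h := Ring.descPochhammer_eq_factorial_smul_choose k i
  rw [← Polynomial.eval_eq_smeval, descPochhammer_eval_eq_prod_range, nsmul_eq_mul] at h
  rw [gbinom, h, Int.mul_ediv_cancel_left _ (by exact_mod_cast i.factorial_ne_zero)]

def IsDeriv.toDerivation {D : A → A} (hD : IsDeriv D) : Derivation ℤ A A :=
  Derivation.mk' (AddMonoidHom.mk' D hD.1).toIntLinearMap fun a b => by
    simp only [AddMonoidHom.coe_toIntLinearMap, AddMonoidHom.mk'_apply, hD.2, smul_eq_mul]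
    ring

theorem eq_zero_of_lt_of_le {X : ℤ → A} {M M' : ℤ} (hX : ∀ i, M < i → X i = 0) (hle : M ≤ M') :
    ∀ i, M' < i → X i = 0 :=
  fun i hi => hX i (hle.trans_lt hi)

theorem le_of_apply_ne_zero {X : ℤ → A} {M i : ℤ} (hX : ∀ i, M < i → X i = 0) (h : X i ≠ 0) :
    i ≤ M :=
  not_lt.1 (mt (hX i) h)

section Product

variable (d : Derivation ℤ A A)

def mulTerm (X Y : ℤ → A) (k : ℤ) : ℤ × ℕ → A
  | (i, l) => Ring.choose i l • (X i * d^[l] (Y (k + l - i)))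

variable {d} {X Y : ℤ → A} {k : ℤ}

theorem mulTerm_ne_zero {p : ℤ × ℕ} (hp : mulTerm d X Y k p ≠ 0) :
    X p.1 ≠ 0 ∧ Y (k + p.2 - p.1) ≠ 0 := by
  obtain ⟨i, l⟩ := p
  refine ⟨fun h => hp (by simp [mulTerm, h]), fun h => hp (by simp [mulTerm, h])⟩

theorem pmul_apply_eq_sum {s : Finset (ℤ × ℕ)} (hs : ∀ p, mulTerm d X Y k p ≠ 0 → p ∈ s) :
    pmul d X Y k = ∑ p ∈ s, mulTerm d X Y k p := by
  have h_inner : ∀ i : ℤ, ∑ᶠ l : ℕ, X i * (gbinom i l • d^[l] (Y (k + l - i)))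
      = ∑ l ∈ s.image Prod.snd, mulTerm d X Y k (i, l) := by
    intro i
    simp only [gbinom_eq_choose, mul_smul_comm]
    exact finsum_eq_sum_of_support_subset _ fun l hl =>
      mem_coe.2 (mem_image.2 ⟨(i, l), hs _ hl, rfl⟩)
  have h_outer : (Function.support fun i => ∑ l ∈ s.image Prod.snd, mulTerm d X Y k (i, l))
      ⊆ ↑(s.image Prod.fst) := by
    intro i hi
    obtain ⟨l, _, hl⟩ := exists_ne_zero_of_sum_ne_zero hi
    exact mem_coe.2 (mem_image.2 ⟨(i, l), hs _ hl, rfl⟩)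
  rw [pmul, finsum_congr h_inner, finsum_eq_sum_of_support_subset _ h_outer, ← sum_product']
  exact (sum_subset (fun p hp => mem_product.2 ⟨mem_image_of_mem _ hp, mem_image_of_mem _ hp⟩)
    fun p _ hp => not_not.1 (mt (hs p) hp)).symm

variable {Mx My : ℤ} (hX : ∀ i, Mx < i → X i = 0) (hY : ∀ i, My < i → Y i = 0)
include hX hY

theorem pmul_apply_eq_sum_Icc_product_range {lo hi : ℤ} {N : ℕ} (hlo : lo ≤ k - My)
    (hhi : Mx ≤ hi) (hN : Mx + My - k < N) :
    pmul d X Y k = ∑ p ∈ Icc lo hi ×ˢ range N, mulTerm d X Y k p := by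
  refine pmul_apply_eq_sum fun p hp => ?_
  have h₁ := le_of_apply_ne_zero hX (mulTerm_ne_zero hp).1
  have h₂ := le_of_apply_ne_zero hY (mulTerm_ne_zero hp).2
  simp only [mem_product, mem_Icc, mem_range]
  omega

theorem pmul_eq_zero_of_lt (hk : Mx + My < k) : pmul d X Y k = 0 := by
  rw [pmul_apply_eq_sum (s := ∅) fun p hp => ?_, sum_empty]
  have h₁ := le_of_apply_ne_zero hX (mulTerm_ne_zero hp).1
  have h₂ := le_of_apply_ne_zero hY (mulTerm_ne_zero hp).2
  omega

end Product

section Associativity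

variable (d : Derivation ℤ A A)

def assocTerm (X Y Z : ℤ → A) (k : ℤ) : ℤ × ℤ × ℕ × ℕ → A
  | (a, b, e, l) => (Ring.choose a e * Ring.choose (a + b - e) l) •
      (X a * d^[e] (Y b) * d^[l] (Z (k + l + e - a - b)))

variable {d} {X Y Z : ℤ → A} {M : ℤ} (hX : ∀ i, M < i → X i = 0) (hY : ∀ i, M < i → Y i = 0)
  (hZ : ∀ i, M < i → Z i = 0) (k : ℤ) {N : ℕ} (hN : 3 * M - k < N)

include hX hY hZ in
theorem assocTerm_support {u : ℤ × ℤ × ℕ × ℕ} (hu : assocTerm d X Y Z k u ≠ 0) :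
    u.1 ≤ M ∧ u.2.1 ≤ M ∧ k + u.2.2.2 + u.2.2.1 - u.1 - u.2.1 ≤ M := by
  obtain ⟨a, b, e, l⟩ := u
  refine ⟨le_of_apply_ne_zero hX fun h => hu ?_, le_of_apply_ne_zero hY fun h => hu ?_,
    le_of_apply_ne_zero hZ fun h => hu ?_⟩ <;> simp [assocTerm, h]

include hX hY hZ hN in
theorem pmul_pmul_apply_eq_sum_assocTerm :
    pmul d (pmul d X Y) Z k
      = ∑ u ∈ Icc (k - 2 * M) M ×ˢ Icc (k - 2 * M) M ×ˢ range N ×ˢ range N,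
          assocTerm d X Y Z k u := by
  have hXY : ∀ i, 2 * M < i → pmul d X Y i = 0 := fun i hi =>
    pmul_eq_zero_of_lt hX hY (by omega)
  have h_expand : ∀ p ∈ Icc (k - M) (2 * M) ×ˢ range N, mulTerm d (pmul d X Y) Z k p
      = ∑ q ∈ Icc (k - 2 * M) M ×ˢ range N,
          assocTerm d X Y Z k (q.1, p.1 + q.2 - q.1, q.2, p.2) := by
    rintro ⟨i, l⟩ hp
    simp only [mem_product, mem_Icc] at hp
    rw [mulTerm, pmul_apply_eq_sum_Icc_product_range hX hY (k := i) (lo := k - 2 * M) (hi := M)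
      (N := N) (by omega) le_rfl (by omega), sum_mul, smul_sum]
    refine sum_congr rfl fun ⟨a, e⟩ _ => ?_
    simp only [mulTerm, assocTerm, show a + (i + e - a) - e = i by ring,
      show k + l + e - a - (i + e - a) = k + l - i by ring, zsmul_eq_mul, Int.cast_mul]
    ring
  rw [pmul_apply_eq_sum_Icc_product_range hXY hZ (lo := k - M) (hi := 2 * M) (N := N)
    (by omega) le_rfl (by omega), sum_congr rfl h_expand, ← sum_product']
  refine sum_bij_ne_zero (fun r _ _ => (r.2.1, r.1.1 + r.2.2 - r.2.1, r.2.2, r.1.2))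
    (fun r hr hne => ?_) (fun r _ _ r' _ _ h => ?_) (fun u hu hne => ?_) fun _ _ _ => rfl
  · have := assocTerm_support hX hY hZ k hne
    simp only [mem_product, mem_Icc, mem_range] at hr this ⊢
    omega
  · simp only [Prod.mk.injEq] at h
    ext <;> omega
  · have := assocTerm_support hX hY hZ k hne
    obtain ⟨a, b, e, l⟩ := u
    simp only [mem_product, mem_Icc, mem_range] at hu this
    refine ⟨((a + b - e, l), (a, e)), ?_, ?_, ?_⟩
    · simp only [mem_product, mem_Icc, mem_range]
      omega
    · simpa using hne
    · simp

include hY hZ hN in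
theorem mulTerm_pmul_eq_sum {a : ℤ} {m : ℕ} (ha : a ≤ M) (hm : m < N) :
    mulTerm d X (pmul d Y Z) k (a, m)
      = ∑ b ∈ Icc (k - 2 * M) M, ∑ n ∈ range N, ∑ e ∈ range N,
          (Ring.choose a m * m.choose e * Ring.choose b n) •
            (X a * d^[e] (Y b) * d^[m - e + n] (Z (k + ↑(m - e + n) + e - a - b))) := by
  rw [mulTerm, pmul_apply_eq_sum_Icc_product_range hY hZ (k := k + m - a) (lo := k - 2 * M)
    (hi := M) (N := N) (by omega) le_rfl (by omega), sum_product, d.iterate_map_sum, mul_sum,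
    smul_sum]
  refine sum_congr rfl fun b _ => ?_
  rw [d.iterate_map_sum, mul_sum, smul_sum]
  refine sum_congr rfl fun n _ => ?_
  rw [mulTerm, d.iterate_map_zsmul, d.iterate_apply_mul_eq_sum_range hm, smul_sum, mul_sum,
    smul_sum]
  refine sum_congr rfl fun e _ => ?_
  rcases le_or_gt e m with hem | hem
  · rw [← Function.iterate_add_apply,
      show k + ↑(m - e + n) + e - a - b = k + m - a + n - b by push_cast; omega]
    simp only [zsmul_eq_mul, nsmul_eq_mul, Int.cast_mul, Int.cast_natCast]
    ring
  · simp [Nat.choose_eq_zero_of_lt hem]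

include hX hY hZ hN in
/-- Leibniz's rule expands `∂^m (Y_b ∂^n Z)`, and Vandermonde's identity recombines the
binomial coefficients into those of `assocTerm`. -/
theorem pmul_pmul_apply_eq_sum_assocTerm' :
    pmul d X (pmul d Y Z) k
      = ∑ u ∈ Icc (k - 2 * M) M ×ˢ Icc (k - 2 * M) M ×ˢ range N ×ˢ range N,
          assocTerm d X Y Z k u := by
  have hYZ : ∀ i, 2 * M < i → pmul d Y Z i = 0 := fun i hi =>
    pmul_eq_zero_of_lt hY hZ (by omega)
  rw [pmul_apply_eq_sum_Icc_product_range hX hYZ (lo := k - 2 * M) (hi := M) (N := N)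
    (by omega) le_rfl (by omega)]
  simp only [sum_product]
  refine sum_congr rfl fun a ha => ?_
  rw [sum_congr rfl fun m hm =>
    mulTerm_pmul_eq_sum hY hZ k hN (mem_Icc.1 ha).2 (mem_range.1 hm), sum_comm]
  refine sum_congr rfl fun b hb => ?_
  rw [sum_congr rfl fun m _ => sum_comm, sum_comm]
  refine sum_congr rfl fun e _ => ?_
  have ha' := (mem_Icc.1 ha).2
  have hb' := (mem_Icc.1 hb).2
  refine (Ring.sum_range_choose_mul_choose_smul a b
    (G := fun l => X a * d^[e] (Y b) * d^[l] (Z (k + l + e - a - b))) fun l hl => ?_).trans ?_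
  · simp only [hZ _ (by omega : M < k + l + e - a - b), Function.iterate_fixed (map_zero d),
      mul_zero]
  · simp only [assocTerm, mul_smul, smul_sum]

theorem pmul_assoc {X Y Z : ℤ → A} (hX : Bdd X) (hY : Bdd Y) (hZ : Bdd Z) :
    pmul d (pmul d X Y) Z = pmul d X (pmul d Y Z) := by
  obtain ⟨Mx, hMx⟩ := hX
  obtain ⟨My, hMy⟩ := hY
  obtain ⟨Mz, hMz⟩ := hZ
  funext k
  obtain ⟨N, hN⟩ := exists_nat_gt (3 * max Mx (max My Mz) - k)
  have hX := eq_zero_of_lt_of_le hMx (le_max_left Mx (max My Mz))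
  have hY := eq_zero_of_lt_of_le hMy ((le_max_left My Mz).trans (le_max_right Mx _))
  have hZ := eq_zero_of_lt_of_le hMz ((le_max_right My Mz).trans (le_max_right Mx _))
  rw [pmul_pmul_apply_eq_sum_assocTerm hX hY hZ k hN,
    pmul_pmul_apply_eq_sum_assocTerm' hX hY hZ k hN]

end Associativity

section RingLaws

variable {d : Derivation ℤ A A} {X Y Z : ℤ → A}

theorem pmul_eq_zero_of_neg (hX : ∀ i < 0, X i = 0) (hY : ∀ i < 0, Y i = 0) {k : ℤ}
    (hk : k < 0) : pmul d X Y k = 0 := by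
  rw [pmul_apply_eq_sum (s := ∅) fun p hp => ?_, sum_empty]
  obtain ⟨i, l⟩ := p
  have h₁ : 0 ≤ i := not_lt.1 (mt (hX _) (mulTerm_ne_zero hp).1)
  have h₂ : 0 ≤ k + l - i := not_lt.1 (mt (hY _) (mulTerm_ne_zero hp).2)
  exact absurd (by simp [mulTerm, Int.choose_eq_zero_of_lt h₁ (by omega : i < l)]) hp

theorem pmul_add (hX : Bdd X) (hY : Bdd Y) (hZ : Bdd Z) :
    pmul d X (Y + Z) = pmul d X Y + pmul d X Z := by
  obtain ⟨Mx, hMx⟩ := hX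
  obtain ⟨My, hMy⟩ := hY
  obtain ⟨Mz, hMz⟩ := hZ
  have hY' := eq_zero_of_lt_of_le hMy (le_max_left My Mz)
  have hZ' := eq_zero_of_lt_of_le hMz (le_max_right My Mz)
  have hYZ : ∀ i, max My Mz < i → (Y + Z) i = 0 := fun i hi => by simp [hY' i hi, hZ' i hi]
  funext k
  obtain ⟨N, hN⟩ := exists_nat_gt (Mx + max My Mz - k)
  rw [Pi.add_apply, pmul_apply_eq_sum_Icc_product_range hMx hYZ le_rfl le_rfl hN,
    pmul_apply_eq_sum_Icc_product_range hMx hY' le_rfl le_rfl hN,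
    pmul_apply_eq_sum_Icc_product_range hMx hZ' le_rfl le_rfl hN, ← sum_add_distrib]
  refine sum_congr rfl fun ⟨i, l⟩ _ => ?_
  simp only [mulTerm, Pi.add_apply, iterate_map_add, mul_add, smul_add]

theorem add_pmul (hX : Bdd X) (hY : Bdd Y) (hZ : Bdd Z) :
    pmul d (X + Y) Z = pmul d X Z + pmul d Y Z := by
  obtain ⟨Mx, hMx⟩ := hX
  obtain ⟨My, hMy⟩ := hY
  obtain ⟨Mz, hMz⟩ := hZ
  have hX' := eq_zero_of_lt_of_le hMx (le_max_left Mx My)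
  have hY' := eq_zero_of_lt_of_le hMy (le_max_right Mx My)
  have hXY : ∀ i, max Mx My < i → (X + Y) i = 0 := fun i hi => by simp [hX' i hi, hY' i hi]
  funext k
  obtain ⟨N, hN⟩ := exists_nat_gt (max Mx My + Mz - k)
  rw [Pi.add_apply, pmul_apply_eq_sum_Icc_product_range hXY hMz le_rfl le_rfl hN,
    pmul_apply_eq_sum_Icc_product_range hX' hMz le_rfl le_rfl hN,
    pmul_apply_eq_sum_Icc_product_range hY' hMz le_rfl le_rfl hN, ← sum_add_distrib]
  refine sum_congr rfl fun ⟨i, l⟩ _ => ?_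
  simp only [mulTerm, Pi.add_apply, add_mul, smul_add]

theorem zero_pmul : pmul d 0 X = 0 := by
  funext k
  simp [pmul]

theorem pmul_zero : pmul d X 0 = 0 := by
  funext k
  simp [pmul]

theorem pone_pmul : pmul d pone X = X := by
  funext k
  rw [pmul_apply_eq_sum (s := {(0, 0)}) fun p hp => ?_, sum_singleton]
  · simp [mulTerm, pone]
  obtain ⟨i, l⟩ := p
  have hi : i = 0 := by
    by_contra hi
    exact (mulTerm_ne_zero hp).1 (by simp [pone, hi])
  subst hi
  have hl : l = 0 := by
    by_contra hl
    exact hp (by simp [mulTerm, Ring.choose_zero_pos ℤ (Nat.pos_of_ne_zero hl)])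
  simp [hl]

theorem pmul_pone : pmul d X pone = X := by
  funext k
  rw [pmul_apply_eq_sum (s := {(k, 0)}) fun p hp => ?_, sum_singleton]
  · simp [mulTerm, pone]
  obtain ⟨i, l⟩ := p
  have hi : k + l - i = 0 := by
    by_contra hi
    exact (mulTerm_ne_zero hp).2 (by simp [pone, hi])
  have hl : l = 0 := by
    rcases l with _ | l
    · rfl
    · push_cast at hi
      exact absurd (by simp [mulTerm, pone, hi, Function.iterate_succ_apply]) hp
  simp only [mem_singleton, Prod.mk.injEq]
  omega

end RingLaws

section Residue

variable {d : Derivation ℤ A A}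

theorem mulTerm_sub_mulTerm_eq (X Y : ℤ → A) (i : ℤ) (l : ℕ) :
    mulTerm d X Y (-1) (i, l) - mulTerm d Y X (-1) (l - 1 - i, l)
      = d (Ring.choose i l • ∑ m ∈ range l,
          (-1 : ℤ) ^ m • (d^[m] (X i) * d^[l - 1 - m] (Y (l - 1 - i)))) := by
  have h_reflect : Ring.choose ((l : ℤ) - 1 - i) l = (-1) ^ l * Ring.choose i l := by
    rw [show (l : ℤ) - 1 - i = -(i + 1 - l) by ring, Ring.choose_neg,
      show i + 1 - (l : ℤ) + l - 1 = i by ring, Units.smul_def, Int.coe_negOnePow_natCast,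
      smul_eq_mul]
  rw [map_zsmul, d.bilinear_concomitant, mulTerm, mulTerm, h_reflect,
    show -1 + (l : ℤ) - i = l - 1 - i by ring, show -1 + (l : ℤ) - (l - 1 - i) = i by ring]
  simp only [zsmul_eq_mul, Int.cast_mul, Int.cast_pow, Int.cast_neg, Int.cast_one]
  ring

theorem res_pmul_sub_res_pmul_mem_range {X Y : ℤ → A} (hX : Bdd X) (hY : Bdd Y) :
    res (pmul d X Y) - res (pmul d Y X) ∈ Set.range d := by
  obtain ⟨Mx, hMx⟩ := hX
  obtain ⟨My, hMy⟩ := hY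
  have hX' := eq_zero_of_lt_of_le hMx (le_max_left Mx My)
  have hY' := eq_zero_of_lt_of_le hMy (le_max_right Mx My)
  set M := max Mx My
  obtain ⟨N, hN⟩ := exists_nat_gt (M + M + 1)
  have h_reindex : ∑ p ∈ Icc (-1 - M) M ×ˢ range N, mulTerm d Y X (-1) p
      = ∑ p ∈ Icc (-1 - M) M ×ˢ range N, mulTerm d Y X (-1) ((p.2 : ℤ) - 1 - p.1, p.2) := by
    refine (sum_bij_ne_zero (fun p _ _ => ((p.2 : ℤ) - 1 - p.1, p.2)) (fun p hp hne => ?_)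
      (fun p _ _ q _ _ h => ?_) (fun q hq hne => ?_) fun _ _ _ => rfl).symm
    · have h₁ := le_of_apply_ne_zero hY' (mulTerm_ne_zero hne).1
      have h₂ := le_of_apply_ne_zero hX' (mulTerm_ne_zero hne).2
      simp only [mem_product, mem_Icc, mem_range] at hp h₁ h₂ ⊢
      omega
    · simp only [Prod.mk.injEq] at h
      ext <;> omega
    · have h₁ := le_of_apply_ne_zero hY' (mulTerm_ne_zero hne).1
      have h₂ := le_of_apply_ne_zero hX' (mulTerm_ne_zero hne).2
      simp only [mem_product, mem_Icc, mem_range] at hq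
      refine ⟨((q.2 : ℤ) - 1 - q.1, q.2), ?_, ?_, ?_⟩
      · simp only [mem_product, mem_Icc, mem_range]
        omega
      · simpa [show (q.2 : ℤ) - 1 - (q.2 - 1 - q.1) = q.1 by ring] using hne
      · simp [show (q.2 : ℤ) - 1 - (q.2 - 1 - q.1) = q.1 by ring]
  rw [res, res,
    pmul_apply_eq_sum_Icc_product_range hX' hY' (k := -1) (N := N) le_rfl le_rfl (by omega),
    pmul_apply_eq_sum_Icc_product_range hY' hX' (k := -1) (N := N) le_rfl le_rfl (by omega),
    h_reindex, ← sum_sub_distrib]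
  exact ⟨_, (map_sum d _ _).trans
    (sum_congr rfl fun p _ => (mulTerm_sub_mulTerm_eq X Y p.1 p.2).symm)⟩

end Residue

namespace Bdd

variable {X Y : ℤ → A}

theorem add (hX : Bdd X) (hY : Bdd Y) : Bdd (X + Y) := by
  obtain ⟨Mx, hMx⟩ := hX
  obtain ⟨My, hMy⟩ := hY
  exact ⟨max Mx My, fun i hi => by
    simp [eq_zero_of_lt_of_le hMx (le_max_left Mx My) i hi,
      eq_zero_of_lt_of_le hMy (le_max_right Mx My) i hi]⟩

theorem neg (hX : Bdd X) : Bdd (-X) := by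
  obtain ⟨M, hM⟩ := hX
  exact ⟨M, fun i hi => by simp [hM i hi]⟩

theorem zero : Bdd (0 : ℤ → A) := ⟨0, fun _ _ => rfl⟩

theorem one : Bdd (pone : ℤ → A) := ⟨0, fun _ hi => if_neg hi.ne'⟩

theorem pmul {d : Derivation ℤ A A} (hX : Bdd X) (hY : Bdd Y) : Bdd (pmul d X Y) := by
  obtain ⟨Mx, hMx⟩ := hX
  obtain ⟨My, hMy⟩ := hY
  exact ⟨Mx + My, fun _ hk => pmul_eq_zero_of_lt hMx hMy hk⟩

theorem pplus (hX : Bdd X) : Bdd (pplus X) := by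
  obtain ⟨M, hM⟩ := hX
  exact ⟨M, fun i hi => by simp [Paper.pplus, hM i hi]⟩

theorem pminus : Bdd (pminus X) := ⟨-1, fun _ hi => if_neg (by omega)⟩

end Bdd

/-- Pseudodifferential operators `∑_{i ≤ M} a_i ∂^i` over the derivation `d`. -/
@[ext]
structure PDO (d : Derivation ℤ A A) where
  coeff : ℤ → A
  bdd : Bdd coeff

namespace PDO

variable {d : Derivation ℤ A A}

instance : Zero (PDO d) := ⟨⟨0, Bdd.zero⟩⟩
instance : One (PDO d) := ⟨⟨pone, Bdd.one⟩⟩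
instance : Add (PDO d) := ⟨fun x y => ⟨x.coeff + y.coeff, x.bdd.add y.bdd⟩⟩
instance : Neg (PDO d) := ⟨fun x => ⟨-x.coeff, x.bdd.neg⟩⟩
instance : Sub (PDO d) :=
  ⟨fun x y => ⟨x.coeff - y.coeff, (sub_eq_add_neg x.coeff y.coeff) ▸ x.bdd.add y.bdd.neg⟩⟩
noncomputable instance : Mul (PDO d) := ⟨fun x y => ⟨pmul d x.coeff y.coeff, x.bdd.pmul y.bdd⟩⟩

theorem coeff_add (x y : PDO d) : (x + y).coeff = x.coeff + y.coeff := rfl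
theorem coeff_sub (x y : PDO d) : (x - y).coeff = x.coeff - y.coeff := rfl
theorem coeff_mul (x y : PDO d) : (x * y).coeff = pmul d x.coeff y.coeff := rfl

noncomputable instance : Ring (PDO d) where
  add_assoc x y z := PDO.ext (add_assoc x.coeff y.coeff z.coeff)
  zero_add x := PDO.ext (zero_add x.coeff)
  add_zero x := PDO.ext (add_zero x.coeff)
  add_comm x y := PDO.ext (add_comm x.coeff y.coeff)
  neg_add_cancel x := PDO.ext (neg_add_cancel x.coeff)
  sub_eq_add_neg x y := PDO.ext (sub_eq_add_neg x.coeff y.coeff)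
  mul_assoc x y z := PDO.ext (pmul_assoc x.bdd y.bdd z.bdd)
  one_mul x := PDO.ext pone_pmul
  mul_one x := PDO.ext pmul_pone
  left_distrib x y z := PDO.ext (pmul_add x.bdd y.bdd z.bdd)
  right_distrib x y z := PDO.ext (add_pmul x.bdd y.bdd z.bdd)
  zero_mul x := PDO.ext zero_pmul
  mul_zero x := PDO.ext pmul_zero
  nsmul := nsmulRec
  zsmul := zsmulRec

theorem coeff_pow (x : PDO d) (n : ℕ) : (x ^ n).coeff = ppow d x.coeff n := by
  induction n with
  | zero => rfl
  | succ n ih => rw [pow_succ', coeff_mul, ih, ppow]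

def plusPart (x : PDO d) : PDO d := ⟨pplus x.coeff, x.bdd.pplus⟩

def minusPart (x : PDO d) : PDO d := ⟨pminus x.coeff, Bdd.pminus⟩

theorem plusPart_add_minusPart (x : PDO d) : x.plusPart + x.minusPart = x := by
  ext i
  by_cases h : 0 ≤ i <;> simp [plusPart, minusPart, coeff_add, pplus, pminus, h]

/-- The subring `R₊` of differential operators. -/
def diffOps : Subring (PDO d) where
  carrier := {x | ∀ i < 0, x.coeff i = 0}
  mul_mem' hx hy _ hi := pmul_eq_zero_of_neg hx hy hi
  one_mem' _ hi := if_neg hi.ne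
  add_mem' hx hy i hi := by simp [coeff_add, hx i hi, hy i hi]
  zero_mem' _ _ := rfl
  neg_mem' hx i hi := neg_eq_zero.2 (hx i hi)

/-- The operators of negative order, `R₋`. -/
def negOrderOps : NonUnitalSubring (PDO d) where
  carrier := {x | ∀ i, -1 < i → x.coeff i = 0}
  mul_mem' hx hy _ hi := pmul_eq_zero_of_lt hx hy (by omega)
  add_mem' hx hy i hi := by simp [coeff_add, hx i hi, hy i hi]
  zero_mem' _ _ := rfl
  neg_mem' hx i hi := neg_eq_zero.2 (hx i hi)

theorem plusPart_mem_diffOps (x : PDO d) : x.plusPart ∈ diffOps := fun _ hi => if_neg hi.not_ge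

theorem minusPart_mem_negOrderOps (x : PDO d) : x.minusPart ∈ negOrderOps :=
  fun _ hi => if_neg (by omega)

def residue : PDO d →+ A where
  toFun x := res x.coeff
  map_zero' := rfl
  map_add' _ _ := rfl

theorem residue_mul_eq_zero_of_mem_diffOps {x y : PDO d} (hx : x ∈ diffOps) (hy : y ∈ diffOps) :
    residue (x * y) = 0 :=
  mul_mem hx hy (-1) (by norm_num)

theorem residue_mul_eq_zero_of_mem_negOrderOps {x y : PDO d} (hx : x ∈ negOrderOps)
    (hy : y ∈ negOrderOps) : residue (x * y) = 0 :=
  pmul_eq_zero_of_lt hx hy (by norm_num)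

theorem residue_commutator_mem_range (x y : PDO d) : residue (x * y - y * x) ∈ Set.range d :=
  res_pmul_sub_res_pmul_mem_range x.bdd y.bdd

section Cyclic

variable (x y z : PDO d)

noncomputable def cyclicSum : PDO d :=
  (x.plusPart * y.plusPart - y.plusPart * x.plusPart) * z.minusPart
    + (y.plusPart * z.plusPart - z.plusPart * y.plusPart) * x.minusPart
    + (z.plusPart * x.plusPart - x.plusPart * z.plusPart) * y.minusPart

/-- Twice the operator `Λ` of the statement. -/
noncomputable def correction : PDO d :=
  (x.plusPart * y.minusPart - y.plusPart * x.minusPart) * z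
      - z * (x.plusPart * y.minusPart - y.plusPart * x.minusPart)
    + (z.plusPart * x.minusPart * y.plusPart - y.plusPart * (z.plusPart * x.minusPart))
    + (x.plusPart * (z.plusPart * y.minusPart) - z.plusPart * y.minusPart * x.plusPart)
    + (x.minusPart * (y * z) - y * z * x.minusPart)
    + (x * z * y.minusPart - y.minusPart * (x * z))

theorem residue_correction_mem_range : residue (correction x y z) ∈ Set.range d := by
  have hadd {a b : A} : a ∈ Set.range d → b ∈ Set.range d → a + b ∈ Set.range d := by
    rintro ⟨u, rfl⟩ ⟨v, rfl⟩
    exact ⟨u + v, map_add d u v⟩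
  simp only [correction, map_add]
  exact hadd (hadd (hadd (hadd (residue_commutator_mem_range _ _)
    (residue_commutator_mem_range _ _)) (residue_commutator_mem_range _ _))
    (residue_commutator_mem_range _ _)) (residue_commutator_mem_range _ _)

variable {x y z} (hxy : Commute x y) (hyz : Commute y z) (hzx : Commute z x)
include hxy hyz hzx

theorem residue_cyclicSum_eq_neg : residue (cyclicSum x y z) = -residue (correction x y z) := by
  have h_id : residue (cyclicSum x y z + correction x y z) = _ :=
    congrArg residue (cyclic_commutator_identity x.plusPart_add_minusPart
      y.plusPart_add_minusPart z.plusPart_add_minusPart hxy hyz hzx)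
  have h_plus : x.plusPart * y.plusPart - y.plusPart * x.plusPart ∈ diffOps :=
    sub_mem (mul_mem (plusPart_mem_diffOps x) (plusPart_mem_diffOps y))
      (mul_mem (plusPart_mem_diffOps y) (plusPart_mem_diffOps x))
  have h_minus : x.minusPart * y.minusPart - y.minusPart * x.minusPart ∈ negOrderOps :=
    sub_mem (mul_mem (minusPart_mem_negOrderOps x) (minusPart_mem_negOrderOps y))
      (mul_mem (minusPart_mem_negOrderOps y) (minusPart_mem_negOrderOps x))
  rw [map_add, map_add, map_sub, map_neg,
    residue_mul_eq_zero_of_mem_diffOps h_plus (plusPart_mem_diffOps z),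
    residue_mul_eq_zero_of_mem_diffOps (plusPart_mem_diffOps z) h_plus,
    residue_mul_eq_zero_of_mem_negOrderOps (minusPart_mem_negOrderOps z) h_minus] at h_id
  exact eq_neg_of_add_eq_zero_left (by simpa using h_id)

theorem residue_cyclicSum_mem_range : residue (cyclicSum x y z) ∈ Set.range d := by
  obtain ⟨a, ha⟩ := residue_correction_mem_range x y z
  exact ⟨-a, by rw [map_neg, ha, residue_cyclicSum_eq_neg hxy hyz hzx]⟩

end Cyclic

end PDO

theorem stmt12_general {A : Type*} [CommRing A] [Algebra ℚ A] (D : A → A) (hD : IsDeriv D)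
    (L : ℤ → A) (hL : Bdd L)
    (i j k : ℕ) :
    (res (pmul D (pcomm D (Lplus D L i) (Lplus D L j)) (Lminus D L k)
        + pmul D (pcomm D (Lplus D L j) (Lplus D L k)) (Lminus D L i)
        + pmul D (pcomm D (Lplus D L k) (Lplus D L i)) (Lminus D L j))
      = (-2 : ℚ) • res ((1 / 2 : ℚ) • (
          pcomm D (pmul D (Lplus D L i) (Lminus D L j)
              - pmul D (Lplus D L j) (Lminus D L i)) (ppow D L k)
          + pcomm D (pmul D (Lplus D L k) (Lminus D L i)) (Lplus D L j)
          + pcomm D (Lplus D L i) (pmul D (Lplus D L k) (Lminus D L j))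
          + pcomm D (Lminus D L i) (ppow D L (j + k))
          + pcomm D (ppow D L (i + k)) (Lminus D L j)))) ∧
    res (pmul D (pcomm D (Lplus D L i) (Lplus D L j)) (Lminus D L k)
        + pmul D (pcomm D (Lplus D L j) (Lplus D L k)) (Lminus D L i)
        + pmul D (pcomm D (Lplus D L k) (Lplus D L i)) (Lminus D L j)) ∈ Set.range D := by
  obtain ⟨d, rfl⟩ : ∃ d : Derivation ℤ A A, ⇑d = D := ⟨hD.toDerivation, rfl⟩
  let ℓ : PDO d := ⟨L, hL⟩
  have h_pow (n : ℕ) : ppow d L n = (ℓ ^ n).coeff := (ℓ.coeff_pow n).symm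
  have h_plus (n : ℕ) : Lplus d L n = (ℓ ^ n).plusPart.coeff := by rw [Lplus, h_pow]; rfl
  have h_minus (n : ℕ) : Lminus d L n = (ℓ ^ n).minusPart.coeff := by rw [Lminus, h_pow]; rfl
  have h_comm (a b : PDO d) : pcomm d a.coeff b.coeff = (a * b - b * a).coeff := rfl
  have h_res (a : PDO d) : res a.coeff = PDO.residue a := rfl
  have h_res_smul (c : ℚ) (a : PDO d) : res (c • a.coeff) = c • PDO.residue a := rfl
  simp only [h_plus, h_minus, h_pow, h_comm, ← PDO.coeff_mul, ← PDO.coeff_sub, ← PDO.coeff_add,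
    h_res, h_res_smul, pow_add]
  have h_commute (a b : ℕ) : Commute (ℓ ^ a) (ℓ ^ b) := (Commute.refl ℓ).pow_pow a b
  refine ⟨?_, PDO.residue_cyclicSum_mem_range (h_commute i j) (h_commute j k) (h_commute k i)⟩
  rw [smul_smul, show (-2 : ℚ) * (1 / 2) = -1 by norm_num, neg_one_smul]
  exact PDO.residue_cyclicSum_eq_neg (h_commute i j) (h_commute j k) (h_commute k i)

/-- For an invertible pseudodifferential operator `L` and positive `i, j, k`,
`res([L^i₊,L^j₊]L^k₋ + [L^j₊,L^k₊]L^i₋ + [L^k₊,L^i₊]L^j₋)` is a total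
derivative, and equals `-2·res(Λ)` with
`Λ = (1/2)([L^i₊L^j₋ − L^j₊L^i₋, L^k] + [L^k₊L^i₋, L^j₊] + [L^i₊, L^k₊L^j₋]
  + [L^i₋, L^(j+k)] + [L^(i+k), L^j₋])`. -/
theorem stmt12 {A : Type*} [CommRing A] [Algebra ℚ A] (D : A → A) (hD : IsDeriv D)
    (L : ℤ → A) (hL : Bdd L)
    (hinv : ∃ L' : ℤ → A, Bdd L' ∧ pmul D L L' = pone ∧ pmul D L' L = pone)
    (i j k : ℕ) (hi : 0 < i) (hj : 0 < j) (hk : 0 < k) :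
    (res (pmul D (pcomm D (Lplus D L i) (Lplus D L j)) (Lminus D L k)
        + pmul D (pcomm D (Lplus D L j) (Lplus D L k)) (Lminus D L i)
        + pmul D (pcomm D (Lplus D L k) (Lplus D L i)) (Lminus D L j))
      = (-2 : ℚ) • res ((1 / 2 : ℚ) • (
          pcomm D (pmul D (Lplus D L i) (Lminus D L j)
              - pmul D (Lplus D L j) (Lminus D L i)) (ppow D L k)
          + pcomm D (pmul D (Lplus D L k) (Lminus D L i)) (Lplus D L j)
          + pcomm D (Lplus D L i) (pmul D (Lplus D L k) (Lminus D L j))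
          + pcomm D (Lminus D L i) (ppow D L (j + k))
          + pcomm D (ppow D L (i + k)) (Lminus D L j)))) ∧
    res (pmul D (pcomm D (Lplus D L i) (Lplus D L j)) (Lminus D L k)
        + pmul D (pcomm D (Lplus D L j) (Lplus D L k)) (Lminus D L i)
        + pmul D (pcomm D (Lplus D L k) (Lplus D L i)) (Lminus D L j)) ∈ Set.range D :=
  stmt12_general D hD L hL i j k

end Paper
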